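/- arXiv:1309.2605 — 2 statements merged into one kernel-verified Lean document; each statement's English description precedes it below -/
import Mathlib

section
/- For every r ∈ ℕ and every polynomial W ∈ ℤ[x₁, x₂, y₁,…,y_r], there exists a positive integer v with the following property: if for all a, b ∈ ℕ, (a ≥ 1 and b = f(a)) holds if and only if there exist y₁,…,y_r ∈ ℕ with W(a, b, y₁,…,y_r) = 0, then for every integer u ≥ v the equation W(u, f(u), y₁,…,y_r) = 0 has infinitely many solutions in non-negative integers y₁,…,y_r. -/
/-!
Suppose `W` represents `f` and, for some large `u`, `W(u, f(u), y) = 0` has only finitely many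
solutions `y ∈ ℕʳ`. Write `W` as a difference of two terms built from variables, `1`, `+` and `·`,
pin the first variable to `u` by a binary numeral and force all variables to be natural numbers by
Lagrange's four-square theorem. Naming every subterm by a new unknown turns this into a subsystem
of `E_n` with only `n = c + O(log u) < u` unknowns, finitely many integer solutions, and a solution
with `f(u)` among its coordinates; hence `f(u) ≤ f(n)`. But `f(k + 1) ≥ f(k)²` (adjoin the square of
a coordinate of absolute value `f(k)`) and `f(2) ≥ 2`, so `f` is strictly increasing from `2` on.
-/


/-- A system `S ⊆ E_n`, encoded by the set `eqOne` of indices `i` carrying the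
equation `x_i = 1`, and the sets `addEq`, `mulEq` of triples `(i, j, k)` carrying
the equations `x_i + x_j = x_k` and `x_i · x_j = x_k` respectively. -/
structure SystemEn (n : ℕ) where
  eqOne : Finset (Fin n)
  addEq : Finset (Fin n × Fin n × Fin n)
  mulEq : Finset (Fin n × Fin n × Fin n)

/-- A tuple `x` solves the system `S` if it satisfies all equations of `S`. -/
def SystemEn.Solves {n : ℕ} {R : Type*} [Semiring R] (S : SystemEn n) (x : Fin n → R) : Prop :=
  (∀ i ∈ S.eqOne, x i = 1) ∧
  (∀ t ∈ S.addEq, x t.1 + x t.2.1 = x t.2.2) ∧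
  (∀ t ∈ S.mulEq, x t.1 * x t.2.1 = x t.2.2)

/-- `fBound n` is the smallest non-negative integer `b` such that for each system
`S ⊆ E_n` with a finite number of solutions in integers `x₁, …, xₙ`, all these
solutions belong to `[-b, b]ⁿ`. -/
noncomputable def fBound (n : ℕ) : ℕ :=
  sInf {b : ℕ | ∀ S : SystemEn n, {x : Fin n → ℤ | S.Solves x}.Finite →
    ∀ x : Fin n → ℤ, S.Solves x → ∀ i, |x i| ≤ (b : ℤ)}

/-- `gBound n` is the greatest finite total number of solutions of a subsystem of
`E_n` in integers `x₁, …, xₙ`. -/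
noncomputable def gBound (n : ℕ) : ℕ :=
  sSup {c : ℕ | ∃ S : SystemEn n, {x : Fin n → ℤ | S.Solves x}.Finite ∧
    {x : Fin n → ℤ | S.Solves x}.ncard = c}

instance (n : ℕ) : Finite (SystemEn n) :=
  Finite.of_injective (fun S : SystemEn n => (S.eqOne, S.addEq, S.mulEq))
    (by rintro ⟨⟩ ⟨⟩ h; simp_all)

lemma fBound_set_nonempty (n : ℕ) :
    {b : ℕ | ∀ S : SystemEn n, {x : Fin n → ℤ | S.Solves x}.Finite →
      ∀ x : Fin n → ℤ, S.Solves x → ∀ i, |x i| ≤ (b : ℤ)}.Nonempty := by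
  have hfin : (⋃ (S : SystemEn n) (_ : {x : Fin n → ℤ | S.Solves x}.Finite) (i : Fin n),
      (fun x : Fin n → ℤ => (x i).natAbs) '' {x | S.Solves x}).Finite :=
    Set.finite_iUnion fun S => Set.finite_iUnion fun hS => Set.finite_iUnion fun i => hS.image _
  obtain ⟨B, hB⟩ := hfin.bddAbove
  refine ⟨B, fun S hS x hx i => ?_⟩
  have : (x i).natAbs ≤ B := hB (Set.mem_iUnion₂_of_mem hS (Set.mem_iUnion_of_mem i ⟨x, hx, rfl⟩))
  rw [Int.abs_eq_natAbs]
  exact_mod_cast this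

lemma abs_le_fBound {n : ℕ} {S : SystemEn n} (hfin : {x : Fin n → ℤ | S.Solves x}.Finite)
    {x : Fin n → ℤ} (hx : S.Solves x) (i : Fin n) : |x i| ≤ fBound n :=
  Nat.sInf_mem (fBound_set_nonempty n) S hfin x hx i

lemma exists_fBound_le_abs {n : ℕ} (hn : fBound n ≠ 0) :
    ∃ S : SystemEn n, {x : Fin n → ℤ | S.Solves x}.Finite ∧
      ∃ x : Fin n → ℤ, S.Solves x ∧ ∃ i, (fBound n : ℤ) ≤ |x i| := by
  unfold fBound at hn ⊢
  have hnot := Nat.notMem_of_lt_sInf (Nat.sub_one_lt hn)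
  simp only [Set.mem_ofPred_eq, not_forall, not_le] at hnot
  obtain ⟨S, hS, x, hx, i, hi⟩ := hnot
  exact ⟨S, hS, x, hx, i, by omega⟩

structure EqSystem (V : Type*) where
  one : Set V
  add : Set (V × V × V)
  mul : Set (V × V × V)

namespace EqSystem

variable {V : Type*}

def Solves (S : EqSystem V) (y : V → ℤ) : Prop :=
  (∀ v ∈ S.one, y v = 1) ∧
  (∀ t ∈ S.add, y t.1 + y t.2.1 = y t.2.2) ∧
  (∀ t ∈ S.mul, y t.1 * y t.2.1 = y t.2.2)

open Classical in
noncomputable def toSystemEn [Fintype V] {n : ℕ} (S : EqSystem V) (e : V ≃ Fin n) :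
    SystemEn n where
  eqOne := (Finset.univ.filter (· ∈ S.one)).map e.toEmbedding
  addEq := (Finset.univ.filter (· ∈ S.add)).map (e.prodCongr (e.prodCongr e)).toEmbedding
  mulEq := (Finset.univ.filter (· ∈ S.mul)).map (e.prodCongr (e.prodCongr e)).toEmbedding

lemma solves_toSystemEn_iff [Fintype V] {n : ℕ} (S : EqSystem V) (e : V ≃ Fin n)
    (x : Fin n → ℤ) : (S.toSystemEn e).Solves x ↔ S.Solves (x ∘ e) := by
  simp only [SystemEn.Solves, Solves, toSystemEn, Finset.forall_mem_map, Finset.mem_filter,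
    Finset.mem_univ, true_and]
  rfl

lemma abs_le_fBound [Fintype V] {S : EqSystem V} (hfin : {y | S.Solves y}.Finite)
    {y : V → ℤ} (hy : S.Solves y) (v : V) : |y v| ≤ fBound (Fintype.card V) := by
  set e := Fintype.equivFin V
  have hfin' : {x : Fin _ → ℤ | (S.toSystemEn e).Solves x}.Finite := by
    simp only [solves_toSystemEn_iff]
    exact hfin.preimage (e.surjective.injective_comp_right.injOn)
  have hx : (S.toSystemEn e).Solves (y ∘ e.symm) := by
    rwa [solves_toSystemEn_iff, Function.comp_assoc, e.symm_comp_self, Function.comp_id]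
  simpa using _root_.abs_le_fBound (x := y ∘ e.symm) hfin' hx (e v)

def ofSystemEn {n : ℕ} (S : SystemEn n) : EqSystem (Fin n) := ⟨S.eqOne, S.addEq, S.mulEq⟩

def adjoinSq (S : EqSystem V) (v : V) : EqSystem (Option V) where
  one := some '' S.one
  add := Prod.map some (Prod.map some some) '' S.add
  mul := insert (some v, some v, none) (Prod.map some (Prod.map some some) '' S.mul)

lemma solves_adjoinSq_iff (S : EqSystem V) (v : V) (y : Option V → ℤ) :
    (S.adjoinSq v).Solves y ↔ S.Solves (y ∘ some) ∧ y none = y (some v) * y (some v) := by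
  simp only [Solves, adjoinSq, Set.forall_mem_image, Set.forall_mem_insert]
  grind

end EqSystem

lemma fBound_sq_le_succ (k : ℕ) : fBound k ^ 2 ≤ fBound (k + 1) := by
  rcases Nat.eq_zero_or_pos (fBound k) with h0 | hpos
  · simp [h0]
  obtain ⟨S, hfin, x, hx, i, hi⟩ := exists_fBound_le_abs hpos.ne'
  set S' := (EqSystem.ofSystemEn S).adjoinSq i
  have hsol (y : Option (Fin k) → ℤ) :
      S'.Solves y ↔ S.Solves (y ∘ some) ∧ y none = y (some i) * y (some i) :=
    EqSystem.solves_adjoinSq_iff _ _ y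
  have hfin' : {y | S'.Solves y}.Finite := by
    refine Set.Finite.of_finite_image (f := (· ∘ some)) (hfin.subset ?_) ?_
    · rintro _ ⟨y, hy, rfl⟩
      exact ((hsol y).1 hy).1
    · intro y₁ hy₁ y₂ hy₂ h
      have h' : ∀ j, y₁ (some j) = y₂ (some j) := congrFun h
      funext o
      cases o with
      | none => rw [((hsol y₁).1 hy₁).2, ((hsol y₂).1 hy₂).2, h']
      | some j => exact h' j
  have hy : S'.Solves (fun o => o.elim (x i * x i) x) := (hsol _).2 ⟨hx, rfl⟩
  have := EqSystem.abs_le_fBound hfin' hy none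
  rw [Fintype.card_option, Fintype.card_fin] at this
  have hsq : ((fBound k : ℤ)) ^ 2 ≤ |x i * x i| := by
    rw [abs_mul, ← sq]
    exact pow_le_pow_left₀ (by positivity) hi 2
  exact_mod_cast hsq.trans this

lemma two_le_fBound_two : 2 ≤ fBound 2 := by
  let S : SystemEn 2 := ⟨{0}, {(0, 0, 1)}, ∅⟩
  have hsol : {x : Fin 2 → ℤ | S.Solves x} = {![1, 2]} := by
    ext x
    simp only [SystemEn.Solves, S, Set.mem_ofPred_eq, Set.mem_singleton_iff, Finset.mem_singleton,
      forall_eq, Finset.notMem_empty, IsEmpty.forall_iff, implies_true, and_true]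
    constructor
    · rintro ⟨h0, h1⟩
      ext j
      fin_cases j <;> simp [h0, ← h1]
    · rintro rfl
      norm_num
  have := abs_le_fBound (S := S) (by rw [hsol]; exact Set.finite_singleton _)
    (hsol.ge rfl) 1
  simp only [Matrix.cons_val_one, Matrix.cons_val_zero] at this
  exact_mod_cast this

lemma two_le_fBound {k : ℕ} (hk : 2 ≤ k) : 2 ≤ fBound k := by
  induction k, hk using Nat.le_induction with
  | base => exact two_le_fBound_two
  | succ k _ ih => nlinarith [fBound_sq_le_succ k]

lemma fBound_mono : Monotone fBound :=
  monotone_nat_of_le_succ fun k => (Nat.le_self_pow two_ne_zero _).trans (fBound_sq_le_succ k)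

lemma fBound_lt_succ {k : ℕ} (hk : 2 ≤ k) : fBound k < fBound (k + 1) := by
  nlinarith [fBound_sq_le_succ k, two_le_fBound hk]

inductive Term (σ : Type*) where
  | var : σ → Term σ
  | one : Term σ
  | add : Term σ → Term σ → Term σ
  | mul : Term σ → Term σ → Term σ
  deriving DecidableEq

namespace Term

variable {σ : Type*} {κ : Type*}

def eval (ρ : σ → ℤ) : Term σ → ℤ
  | var s => ρ s
  | one => 1
  | add t₁ t₂ => t₁.eval ρ + t₂.eval ρ
  | mul t₁ t₂ => t₁.eval ρ * t₂.eval ρ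

def Solves (E : κ → Term σ × Term σ) (ρ : σ → ℤ) : Prop :=
  ∀ k, (E k).1.eval ρ = (E k).2.eval ρ

/-- Binary numeral; `numeral 0` is junk (there is no constant `0`). -/
def numeral : ℕ → Term σ
  | 0 | 1 => one
  | n + 2 =>
    if (n + 2) % 2 = 0 then add (numeral ((n + 2) / 2)) (numeral ((n + 2) / 2))
    else add (add (numeral ((n + 2) / 2)) (numeral ((n + 2) / 2))) one
  decreasing_by all_goals omega

lemma eval_numeral (ρ : σ → ℤ) {n : ℕ} (hn : n ≠ 0) : (numeral n).eval ρ = n := by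
  induction n using Nat.strong_induction_on with
  | _ n ih =>
    match n, hn with
    | 1, _ => simp [numeral, eval]
    | n + 2, _ =>
      have ih' := ih ((n + 2) / 2) (by omega) (by omega)
      rw [numeral]
      split_ifs <;> simp only [eval, ih'] <;> omega

lemma exists_eval_eq_sub (P : MvPolynomial σ ℤ) :
    ∃ T₁ T₂ : Term σ, ∀ ρ, MvPolynomial.eval ρ P = T₁.eval ρ - T₂.eval ρ := by
  induction P using MvPolynomial.induction_on with
  | C c =>
    refine ⟨numeral (c.toNat + 1), numeral ((-c).toNat + 1), fun ρ => ?_⟩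
    rw [eval_numeral ρ (by omega), eval_numeral ρ (by omega), MvPolynomial.eval_C]
    omega
  | add P Q ihP ihQ =>
    obtain ⟨T₁, T₂, hT⟩ := ihP
    obtain ⟨U₁, U₂, hU⟩ := ihQ
    exact ⟨add T₁ U₁, add T₂ U₂, fun ρ => by simp only [map_add, hT, hU, eval]; ring⟩
  | mul_X P s ih =>
    obtain ⟨T₁, T₂, hT⟩ := ih
    exact ⟨mul T₁ (var s), mul T₂ (var s), fun ρ => by
      simp only [map_mul, hT, MvPolynomial.eval_X, eval]; ring⟩

variable [DecidableEq σ]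

def subterms : Term σ → Finset (Term σ)
  | var s => {var s}
  | one => {one}
  | add t₁ t₂ => insert (add t₁ t₂) (t₁.subterms ∪ t₂.subterms)
  | mul t₁ t₂ => insert (mul t₁ t₂) (t₁.subterms ∪ t₂.subterms)

lemma mem_subterms_self (t : Term σ) : t ∈ t.subterms := by
  cases t <;> simp [subterms]

lemma subterms_subset_of_mem {t u : Term σ} (h : u ∈ t.subterms) : u.subterms ⊆ t.subterms := by
  induction t with
  | var s | one => simp_all [subterms]
  | add t₁ t₂ ih₁ ih₂ | mul t₁ t₂ ih₁ ih₂ =>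
    simp only [subterms, Finset.mem_insert, Finset.mem_union] at h ⊢
    rcases h with rfl | h | h
    · exact subset_rfl
    · exact (ih₁ h).trans (by grind)
    · exact (ih₂ h).trans (by grind)

lemma card_subterms_add_self (t : Term σ) : (add t t).subterms.card ≤ t.subterms.card + 1 := by
  grw [subterms, Finset.card_insert_le, Finset.union_self]

lemma card_subterms_numeral (n : ℕ) : (numeral n : Term σ).subterms.card ≤ 3 * Nat.log 2 n + 1 := by
  induction n using Nat.strong_induction_on with
  | _ n ih =>
    match n with
    | 0 | 1 => simp [numeral, subterms]
    | n + 2 =>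
      have ih' := ih ((n + 2) / 2) (by omega)
      have hlog : Nat.log 2 ((n + 2) / 2) = Nat.log 2 (n + 2) - 1 := Nat.log_div_base 2 (n + 2)
      have hpos : 0 < Nat.log 2 (n + 2) := Nat.log_pos (by omega) (by omega)
      have hstep : (numeral (n + 2) : Term σ).subterms.card ≤
          (numeral ((n + 2) / 2) : Term σ).subterms.card + 3 := by
        rw [numeral]
        split_ifs
        · grw [card_subterms_add_self]
          omega
        · grw [subterms, Finset.card_insert_le, Finset.card_union_le, card_subterms_add_self]
          simp [subterms]
      omega

variable [Fintype σ] [Fintype κ]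

def unknowns (E : κ → Term σ × Term σ) : Finset (Term σ) :=
  insert one (Finset.univ.image var ∪
    Finset.univ.biUnion fun k => (E k).1.subterms ∪ (E k).2.subterms)

variable {E : κ → Term σ × Term σ}

lemma one_mem_unknowns : one ∈ unknowns E := Finset.mem_insert_self _ _

lemma var_mem_unknowns (s : σ) : var s ∈ unknowns E := by simp [unknowns]

lemma subterms_eqn_subset_unknowns (k : κ) :
    (E k).1.subterms ∪ (E k).2.subterms ⊆ unknowns E := by
  rw [unknowns]
  exact (Finset.subset_biUnion_of_mem (fun k => (E k).1.subterms ∪ (E k).2.subterms)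
    (Finset.mem_univ k)).trans (Finset.subset_union_right.trans (Finset.subset_insert _ _))

lemma fst_mem_unknowns (k : κ) : (E k).1 ∈ unknowns E :=
  subterms_eqn_subset_unknowns k (Finset.mem_union_left _ (mem_subterms_self _))

lemma snd_mem_unknowns (k : κ) : (E k).2 ∈ unknowns E :=
  subterms_eqn_subset_unknowns k (Finset.mem_union_right _ (mem_subterms_self _))

lemma subterms_subset_unknowns {t : Term σ} (h : t ∈ unknowns E) : t.subterms ⊆ unknowns E := by
  simp only [unknowns, Finset.mem_insert, Finset.mem_union, Finset.mem_image,
    Finset.mem_biUnion] at h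
  rcases h with rfl | ⟨s, -, rfl⟩ | ⟨k, -, h | h⟩
  · simp [subterms, one_mem_unknowns]
  · simp [subterms, var_mem_unknowns]
  · exact (subterms_subset_of_mem h).trans (Finset.subset_union_left.trans
      (subterms_eqn_subset_unknowns k))
  · exact (subterms_subset_of_mem h).trans (Finset.subset_union_right.trans
      (subterms_eqn_subset_unknowns k))

lemma card_unknowns_le : (unknowns E).card ≤
    Fintype.card σ + 1 + ∑ k, ((E k).1.subterms.card + (E k).2.subterms.card) := by
  grw [unknowns, Finset.card_insert_le, Finset.card_union_le, Finset.card_image_le,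
    Finset.card_biUnion_le, Finset.card_univ]
  have := Finset.sum_le_sum fun k (_ : k ∈ Finset.univ) =>
    Finset.card_union_le (E k).1.subterms (E k).2.subterms
  omega

/-- The equation `l = r` of `E` becomes `x_l · x_1 = x_r`. -/
def toEqSystem (E : κ → Term σ × Term σ) : EqSystem (unknowns E) where
  one := {t | t.1 = one}
  add := {t | t.2.2.1 = add t.1.1 t.2.1.1}
  mul := {t | t.2.2.1 = mul t.1.1 t.2.1.1 ∨ t.2.1.1 = one ∧ ∃ k, E k = (t.1.1, t.2.2.1)}

lemma solves_toEqSystem_eval {ρ : σ → ℤ} (hρ : Solves E ρ) :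
    (toEqSystem E).Solves fun t => t.1.eval ρ := by
  refine ⟨fun t (ht : t.1 = one) => by simp [ht, eval], fun t (ht : _ = _) => by simp [ht, eval],
    fun t ht => ?_⟩
  rcases ht with ht | ⟨h1, k, hk⟩
  · simp [ht, eval]
  · simp only [h1, eval, mul_one]
    simpa [hk] using hρ k

lemma exists_solves_of_solves_toEqSystem {y : unknowns E → ℤ}
    (hy : (toEqSystem E).Solves y) : ∃ ρ, Solves E ρ ∧ y = fun t => t.1.eval ρ := by
  obtain ⟨hone, hadd, hmul⟩ := hy
  set ρ : σ → ℤ := fun s => y ⟨var s, var_mem_unknowns s⟩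
  have hval : ∀ t (ht : t ∈ unknowns E), y ⟨t, ht⟩ = t.eval ρ := by
    intro t
    induction t with
    | var s => exact fun _ => rfl
    | one => exact fun ht => hone ⟨one, ht⟩ rfl
    | add t₁ t₂ ih₁ ih₂ =>
      intro ht
      have h₁ : t₁ ∈ unknowns E :=
        subterms_subset_unknowns ht (by simp [subterms, mem_subterms_self])
      have h₂ : t₂ ∈ unknowns E :=
        subterms_subset_unknowns ht (by simp [subterms, mem_subterms_self])
      rw [← hadd (⟨t₁, h₁⟩, ⟨t₂, h₂⟩, ⟨_, ht⟩) rfl, ih₁, ih₂, eval]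
    | mul t₁ t₂ ih₁ ih₂ =>
      intro ht
      have h₁ : t₁ ∈ unknowns E :=
        subterms_subset_unknowns ht (by simp [subterms, mem_subterms_self])
      have h₂ : t₂ ∈ unknowns E :=
        subterms_subset_unknowns ht (by simp [subterms, mem_subterms_self])
      rw [← hmul (⟨t₁, h₁⟩, ⟨t₂, h₂⟩, ⟨_, ht⟩) (Or.inl rfl), ih₁, ih₂, eval]
  refine ⟨ρ, fun k => ?_, funext fun t => hval t.1 t.2⟩
  have := hmul (⟨_, fst_mem_unknowns k⟩, ⟨one, one_mem_unknowns⟩, ⟨_, snd_mem_unknowns k⟩)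
    (Or.inr ⟨rfl, k, rfl⟩)
  rwa [hone ⟨one, one_mem_unknowns⟩ rfl, mul_one, hval, hval] at this

lemma abs_le_fBound_card_unknowns (hfin : {ρ | Solves E ρ}.Finite)
    {ρ : σ → ℤ} (hρ : Solves E ρ) (s : σ) : |ρ s| ≤ fBound (unknowns E).card := by
  have hfin' : {y | (toEqSystem E).Solves y}.Finite := by
    refine (hfin.image fun ρ (t : unknowns E) => t.1.eval ρ).subset fun y hy => ?_
    obtain ⟨ρ, hρ, rfl⟩ := exists_solves_of_solves_toEqSystem hy
    exact ⟨ρ, hρ, rfl⟩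
  simpa [eval] using
    EqSystem.abs_le_fBound hfin' (solves_toEqSystem_eval hρ) ⟨var s, var_mem_unknowns s⟩

end Term

section NatZeros

open Term

variable {ι : Type*}

def natZeros (P : MvPolynomial ι ℤ) (i₀ : ι) (u : ℕ) : Set (ι → ℕ) :=
  {y | y i₀ = u ∧ MvPolynomial.eval (fun i => (y i : ℤ)) P = 0}

def sumFourSq (i : ι) : Term (ι ⊕ ι × Fin 4) :=
  let sq k := mul (var (.inr (i, k))) (var (.inr (i, k)))
  add (add (sq 0) (sq 1)) (add (sq 2) (sq 3))

lemma eval_sumFourSq (ρ : ι ⊕ ι × Fin 4 → ℤ) (i : ι) :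
    (sumFourSq i).eval ρ = ∑ k, ρ (.inr (i, k)) ^ 2 := by
  simp [sumFourSq, eval, Fin.sum_univ_four, sq, add_assoc]

def natEqs (T₁ T₂ : Term (ι ⊕ ι × Fin 4)) (i₀ : ι) (u : ℕ) :
    Option (Option ι) → Term (ι ⊕ ι × Fin 4) × Term (ι ⊕ ι × Fin 4)
  | none => (T₁, T₂)
  | some none => (var (.inl i₀), numeral u)
  | some (some i) => (var (.inl i), sumFourSq i)

variable {P : MvPolynomial ι ℤ} {T₁ T₂ : Term (ι ⊕ ι × Fin 4)} {i₀ : ι} {u : ℕ}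

lemma solves_natEqs_iff
    (hT : ∀ ρ, MvPolynomial.eval (ρ ∘ Sum.inl) P = T₁.eval ρ - T₂.eval ρ) (hu : u ≠ 0)
    (ρ : ι ⊕ ι × Fin 4 → ℤ) :
    Solves (natEqs T₁ T₂ i₀ u) ρ ↔ MvPolynomial.eval (ρ ∘ Sum.inl) P = 0 ∧
      ρ (.inl i₀) = u ∧ ∀ i, ρ (.inl i) = ∑ k, ρ (.inr (i, k)) ^ 2 := by
  simp [Solves, Option.forall, natEqs, eval, eval_numeral ρ hu, eval_sumFourSq, hT, sub_eq_zero]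

lemma exists_solves_natEqs
    (hT : ∀ ρ, MvPolynomial.eval (ρ ∘ Sum.inl) P = T₁.eval ρ - T₂.eval ρ) (hu : u ≠ 0)
    {y : ι → ℕ} (hy : y ∈ natZeros P i₀ u) :
    ∃ ρ, Solves (natEqs T₁ T₂ i₀ u) ρ ∧ ∀ i, ρ (.inl i) = y i := by
  choose a b c d habcd using fun i => Nat.sum_four_squares (y i)
  let ρ : ι ⊕ ι × Fin 4 → ℤ :=
    Sum.elim (fun i => y i) fun q => (![a q.1, b q.1, c q.1, d q.1] q.2 : ℕ)
  refine ⟨ρ, (solves_natEqs_iff hT hu ρ).2 ⟨hy.2, by simp [ρ, hy.1], fun i => ?_⟩, fun i => rfl⟩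
  simp only [ρ, Sum.elim_inl, Sum.elim_inr, Fin.sum_univ_four]
  exact_mod_cast (habcd i).symm

variable [Fintype ι] [DecidableEq ι]

lemma finite_solves_natEqs
    (hT : ∀ ρ, MvPolynomial.eval (ρ ∘ Sum.inl) P = T₁.eval ρ - T₂.eval ρ) (hu : u ≠ 0)
    (hfin : (natZeros P i₀ u).Finite) : {ρ | Solves (natEqs T₁ T₂ i₀ u) ρ}.Finite := by
  obtain ⟨B, hB⟩ := hfin.bddAbove
  let c : ι ⊕ ι × Fin 4 → ℤ := fun v => B (v.elim id Prod.fst)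
  refine (Set.finite_Icc (-c) c).subset fun ρ hρ => ?_
  obtain ⟨hP, hi₀, hsq⟩ := (solves_natEqs_iff hT hu ρ).1 hρ
  have hnonneg (i : ι) : 0 ≤ ρ (.inl i) := hsq i ▸ by positivity
  have hle (i : ι) : ρ (.inl i) ≤ B i := by
    have hmem : (fun i => (ρ (.inl i)).toNat) ∈ natZeros P i₀ u := by
      refine ⟨by simp [hi₀], ?_⟩
      simpa [Int.toNat_of_nonneg (hnonneg _), Function.comp_def] using hP
    have : (ρ (.inl i)).toNat ≤ B i := hB hmem i
    omega
  have habs : ∀ v, |ρ v| ≤ c v := by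
    rintro (i | ⟨i, k⟩)
    · simpa [c, abs_of_nonneg (hnonneg i)] using hle i
    · calc |ρ (.inr (i, k))| ≤ ρ (.inr (i, k)) ^ 2 := by
            simpa using Int.natAbs_le_self_sq (ρ (.inr (i, k)))
        _ ≤ ∑ k, ρ (.inr (i, k)) ^ 2 :=
            Finset.single_le_sum (fun k _ => sq_nonneg (ρ (.inr (i, k)))) (Finset.mem_univ k)
        _ ≤ c (.inr (i, k)) := hsq i ▸ hle i
  exact ⟨fun v => (abs_le.1 (habs v)).1, fun v => (abs_le.1 (habs v)).2⟩

theorem exists_le_fBound_of_finite_natZeros (P : MvPolynomial ι ℤ) (i₀ : ι) :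
    ∃ c : ℕ, ∀ u ≠ 0, (natZeros P i₀ u).Finite →
      ∀ y ∈ natZeros P i₀ u, ∀ i, y i ≤ fBound (c + 3 * Nat.log 2 u) := by
  obtain ⟨T₁, T₂, hT⟩ :=
    exists_eval_eq_sub (MvPolynomial.rename Sum.inl P : MvPolynomial (ι ⊕ ι × Fin 4) ℤ)
  simp only [MvPolynomial.eval_rename] at hT
  set c := Fintype.card (ι ⊕ ι × Fin 4) + 3 + (T₁.subterms.card + T₂.subterms.card) +
    ∑ i : ι, (1 + (sumFourSq i).subterms.card)
  refine ⟨c, fun u hu hfin y hy i => ?_⟩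
  obtain ⟨ρ, hρ, hρy⟩ := exists_solves_natEqs hT hu hy
  have hbound := abs_le_fBound_card_unknowns (finite_solves_natEqs hT hu hfin) hρ (.inl i)
  have hcard : (unknowns (natEqs T₁ T₂ i₀ u)).card ≤ c + 3 * Nat.log 2 u := by
    grw [card_unknowns_le]
    simp only [Fintype.sum_option, natEqs, subterms, Finset.card_singleton]
    have := card_subterms_numeral (σ := ι ⊕ ι × Fin 4) u
    omega
  rw [hρy, Nat.abs_cast] at hbound
  have := fBound_mono hcard
  omega

end NatZeros

lemma exists_add_mul_log_lt (c : ℕ) : ∃ v, ∀ u ≥ v, c + 3 * Nat.log 2 u < u := by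
  refine ⟨2 ^ (c + 8), fun u hu => ?_⟩
  have hL : c + 8 ≤ Nat.log 2 u := Nat.le_log_of_pow_le (by norm_num) hu
  have hu' : 2 ^ Nat.log 2 u ≤ u :=
    Nat.pow_log_le_self 2 (by have := Nat.one_le_two_pow.trans hu; omega)
  have hpow : 2 ^ Nat.log 2 u = 2 ^ (Nat.log 2 u - 2) * 4 := by
    rw [← pow_sub_mul_pow 2 (show 2 ≤ Nat.log 2 u by omega)]
    norm_num
  have := Nat.lt_two_pow_self (n := Nat.log 2 u - 2)
  omega

lemma natCast_eq_sumElim {r : ℕ} (z : Fin 2 ⊕ Fin r → ℕ) :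
    (fun i => (z i : ℤ)) =
      Sum.elim ![(z (.inl 0) : ℤ), (z (.inl 1) : ℤ)] fun j => (z (.inr j) : ℤ) := by
  funext i
  rcases i with i | j
  · fin_cases i <;> rfl
  · rfl

lemma finite_natZeros_of_represents {r : ℕ} {W : MvPolynomial (Fin 2 ⊕ Fin r) ℤ} {f : ℕ → ℕ}
    (H : ∀ a b : ℕ, (1 ≤ a ∧ b = f a) ↔ ∃ y : Fin r → ℕ,
      MvPolynomial.eval (Sum.elim ![(a : ℤ), (b : ℤ)] fun j => (y j : ℤ)) W = 0)
    {u : ℕ} (hfin : {y : Fin r → ℕ |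
      MvPolynomial.eval (Sum.elim ![(u : ℤ), (f u : ℤ)] fun j => (y j : ℤ)) W = 0}.Finite) :
    (natZeros W (.inl 0) u).Finite := by
  refine (hfin.image fun y => Sum.elim ![u, f u] y).subset fun z ⟨hz₀, hz⟩ => ?_
  rw [natCast_eq_sumElim] at hz
  obtain ⟨-, hz₁⟩ := (H _ _).2 ⟨_, hz⟩
  refine ⟨fun j => z (.inr j), by simpa [← hz₀, ← hz₁] using hz, funext fun i => ?_⟩
  rcases i with i | j
  · fin_cases i
    · exact hz₀.symm
    · simp [hz₁, hz₀]
  · rfl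

open MvPolynomial

/-- for every `r` and every polynomial `W`, one can find a positive
integer `v` such that if `W` gives a Diophantine representation of `f`, then for
every integer `u ≥ v` the equation `W(u, f(u), y₁, …, y_r) = 0` has infinitely many
solutions in non-negative integers `y₁, …, y_r`. -/
theorem stmt5 (r : ℕ) (W : MvPolynomial (Fin 2 ⊕ Fin r) ℤ) :
    ∃ v : ℕ, 0 < v ∧
      ((∀ a b : ℕ,
          (1 ≤ a ∧ b = fBound a) ↔
            ∃ y : Fin r → ℕ,
              eval (Sum.elim ![(a : ℤ), (b : ℤ)] fun j => (y j : ℤ)) W = 0) →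
        ∀ u : ℕ, v ≤ u →
          {y : Fin r → ℕ |
            eval (Sum.elim ![(u : ℤ), (fBound u : ℤ)] fun j => (y j : ℤ)) W = 0}.Infinite) := by
  obtain ⟨c, hc⟩ := exists_le_fBound_of_finite_natZeros W (.inl 0)
  obtain ⟨v, hv⟩ := exists_add_mul_log_lt c
  refine ⟨max v 3, by positivity, fun H u hu hfin => ?_⟩
  have hu₃ : 3 ≤ u := le_of_max_le_right hu
  have hlog : c + 3 * Nat.log 2 u ≤ u - 1 := by have := hv u (le_of_max_le_left hu); omega
  obtain ⟨y, hy⟩ := (H u (fBound u)).1 ⟨by omega, rfl⟩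
  have hz : Sum.elim ![u, fBound u] y ∈ natZeros W (.inl 0) u := by
    refine ⟨rfl, ?_⟩
    rw [natCast_eq_sumElim]
    simpa using hy
  have hle : fBound u ≤ fBound (c + 3 * Nat.log 2 u) :=
    hc u (by omega) (finite_natZeros_of_represents H hfin) _ hz (.inl 1)
  have hlt := fBound_lt_succ (k := u - 1) (by omega)
  rw [Nat.sub_add_cancel (by omega)] at hlt
  have := fBound_mono hlog
  omega
end

section
/- There is no finite-fold Diophantine representation of the function g. That is, there do not exist r ∈ ℕ and a polynomial W ∈ ℤ[x₁, x₂, y₁,…,y_r] such that both: (i) for all a, b ∈ ℕ, (a ≥ 1 and b = g(a)) holds if and only if there exist y₁,…,y_r ∈ ℕ with W(a, b, y₁,…,y_r) = 0, and (ii) for every (a, b) ∈ ℕ² the set {(y₁,…,y_r) ∈ ℕʳ : W(a, b, y₁,…,y_r) = 0} is finite. -/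
open MvPolynomial

/-!
If `W` were a finite-fold representation of `g`, fix a large `n` and substitute in
`W(a, b, y) = 0`: `a := n` written in binary, `b := z + w` with `z`, `w` sums of four squares of
fresh integer variables, and each `y_j` a sum of four squares. Every integer solution then has
`z + w = g(n)` and `y` in the finite fibre over `(n, g(n))`, so there are finitely many of them;
yet each of the `g(n) + 1` splittings `g(n) = z + w` gives one. Introducing one variable per
`1`, `+` and `·` of the resulting equation turns it into a subsystem of `E_m` with the same number
of solutions, where `m` grows only like `log n`. For `n` large, `m ≤ n`, hence
`g(n) + 1 ≤ g(n)`.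
-/

inductive BinOp
  | add
  | mul

def BinOp.apply : BinOp → ℤ → ℤ → ℤ
  | add, a, b => a + b
  | mul, a, b => a * b

inductive Eqn (α : Type*) where
  | one (i : α)
  | bin (op : BinOp) (i j k : α)

namespace Eqn

variable {α β : Type*}

def Holds (x : α → ℤ) : Eqn α → Prop
  | one i => x i = 1
  | bin op i j k => op.apply (x i) (x j) = x k

def map (f : α → β) : Eqn α → Eqn β
  | one i => one (f i)
  | bin op i j k => bin op (f i) (f j) (f k)

lemma holds_map (f : α → β) (x : β → ℤ) (q : Eqn α) : (q.map f).Holds x ↔ q.Holds (x ∘ f) := by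
  cases q <;> rfl

def solutions (L : List (Eqn α)) : Set (α → ℤ) := {x | ∀ q ∈ L, q.Holds x}

lemma solutions_append (L₁ L₂ : List (Eqn α)) :
    solutions (L₁ ++ L₂) = solutions L₁ ∩ solutions L₂ := by
  ext x
  simp [solutions, or_imp, forall_and]

lemma mem_solutions_map {f : α → β} {L : List (Eqn α)} {x : β → ℤ} :
    x ∈ solutions (L.map (map f)) ↔ x ∘ f ∈ solutions L := by
  simp [solutions, holds_map]

lemma solutions_map_equiv (e : α ≃ β) (L : List (Eqn α)) :
    solutions (L.map (map e)) = (· ∘ e.symm) '' solutions L := by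
  ext x
  rw [mem_solutions_map]
  constructor
  · exact fun hx => ⟨x ∘ e, hx, by ext; simp⟩
  · rintro ⟨y, hy, rfl⟩
    simpa [Function.comp_assoc] using hy

lemma solutions_pad (L : List (Eqn α)) (m : ℕ) :
    solutions (L.map (map Sum.inl) ++ (List.finRange m).map (one ∘ Sum.inr)) =
      (fun y => Sum.elim y (1 : Fin m → ℤ)) '' solutions L := by
  ext x
  simp only [solutions_append, Set.mem_inter_iff, mem_solutions_map, Set.mem_image]
  constructor
  · rintro ⟨hx, hone⟩
    refine ⟨_, hx, funext fun i => ?_⟩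
    cases i with
    | inl a => rfl
    | inr i => exact (hone _ (List.mem_map_of_mem (List.mem_finRange i))).symm
  · rintro ⟨y, hy, rfl⟩
    refine ⟨hy, fun q hq => ?_⟩
    obtain ⟨i, -, rfl⟩ := List.mem_map.mp hq
    rfl

end Eqn

namespace SystemEn

variable {n : ℕ}

def ofList (L : List (Eqn (Fin n))) : SystemEn n where
  eqOne := (L.filterMap fun | .one i => some i | _ => none).toFinset
  addEq := (L.filterMap fun | .bin .add i j k => some (i, j, k) | _ => none).toFinset
  mulEq := (L.filterMap fun | .bin .mul i j k => some (i, j, k) | _ => none).toFinset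

lemma solves_ofList_iff (L : List (Eqn (Fin n))) (x : Fin n → ℤ) :
    (ofList L).Solves x ↔ x ∈ Eqn.solutions L := by
  simp only [Solves, ofList, List.mem_toFinset, List.mem_filterMap, Eqn.solutions,
    Set.mem_ofPred_eq]
  constructor
  · rintro ⟨h₁, h₂, h₃⟩ (i | ⟨_ | _, i, j, k⟩) hq
    · exact h₁ i ⟨_, hq, rfl⟩
    · exact h₂ (i, j, k) ⟨_, hq, rfl⟩
    · exact h₃ (i, j, k) ⟨_, hq, rfl⟩
  · intro h
    refine ⟨?_, ?_, ?_⟩ <;>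
    · rintro _ ⟨(_ | ⟨_ | _, _, _, _⟩), hq, ⟨⟩⟩
      exact h _ hq

instance : Finite (SystemEn n) :=
  Finite.of_injective (fun S => (S.eqOne, S.addEq, S.mulEq)) fun ⟨_, _, _⟩ ⟨_, _, _⟩ h => by
    simp_all

lemma ncard_le_gBound (S : SystemEn n) (hS : {x : Fin n → ℤ | S.Solves x}.Finite) :
    {x : Fin n → ℤ | S.Solves x}.ncard ≤ gBound n := by
  refine le_csSup (Set.Finite.bddAbove ?_) ⟨S, hS, rfl⟩
  refine (Set.finite_range fun S : SystemEn n => {x : Fin n → ℤ | S.Solves x}.ncard).subset ?_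
  rintro _ ⟨S, -, rfl⟩
  exact ⟨S, rfl⟩

end SystemEn

theorem Eqn.ncard_solutions_le_gBound {α : Type*} [Fintype α] {n : ℕ} (L : List (Eqn α))
    (hα : Fintype.card α ≤ n) (hL : (solutions L).Finite) :
    (solutions L).ncard ≤ gBound n := by
  let e : α ⊕ Fin (n - Fintype.card α) ≃ Fin n :=
    ((Fintype.equivFin α).sumCongr (Equiv.refl _)).trans
      (finSumFinEquiv.trans (finCongr (by omega)))
  let L' := (L.map (map Sum.inl) ++ (List.finRange _).map (one ∘ Sum.inr)).map (map e)
  let f : (α → ℤ) → (Fin n → ℤ) := fun y => Sum.elim y 1 ∘ e.symm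
  have hf : f.Injective := fun y y' h => funext fun a => by
    simpa [f] using congrFun h (e (Sum.inl a))
  have hL' : {x | (SystemEn.ofList L').Solves x} = f '' solutions L := by
    ext x
    rw [Set.mem_ofPred_eq, SystemEn.solves_ofList_iff, solutions_map_equiv, solutions_pad,
      Set.image_image]
  rw [← Set.ncard_image_of_injective _ hf, ← hL']
  exact SystemEn.ncard_le_gBound _ (hL' ▸ hL.image f)

inductive ArithExpr (σ : Type*) where
  | one
  | var (s : σ)
  | bin (op : BinOp) (e₁ e₂ : ArithExpr σ)

namespace ArithExpr

variable {σ τ : Type*}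

instance : One (ArithExpr σ) := ⟨one⟩
instance : Add (ArithExpr σ) := ⟨bin .add⟩
instance : Mul (ArithExpr σ) := ⟨bin .mul⟩

def eval (v : σ → ℤ) : ArithExpr σ → ℤ
  | one => 1
  | var s => v s
  | bin op e₁ e₂ => op.apply (e₁.eval v) (e₂.eval v)

@[simp] lemma eval_one (v : σ → ℤ) : (1 : ArithExpr σ).eval v = 1 := rfl
@[simp] lemma eval_var (v : σ → ℤ) (s : σ) : (var s).eval v = v s := rfl
@[simp] lemma eval_add (v : σ → ℤ) (e₁ e₂ : ArithExpr σ) :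
    (e₁ + e₂).eval v = e₁.eval v + e₂.eval v := rfl
@[simp] lemma eval_mul (v : σ → ℤ) (e₁ e₂ : ArithExpr σ) :
    (e₁ * e₂).eval v = e₁.eval v * e₂.eval v := rfl

def size : ArithExpr σ → ℕ
  | one | var _ => 1
  | bin _ e₁ e₂ => e₁.size + e₂.size + 1

def subst (f : σ → ArithExpr τ) : ArithExpr σ → ArithExpr τ
  | one => one
  | var s => f s
  | bin op e₁ e₂ => bin op (e₁.subst f) (e₂.subst f)

lemma eval_subst (f : σ → ArithExpr τ) (v : τ → ℤ) (e : ArithExpr σ) :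
    (e.subst f).eval v = e.eval fun s => (f s).eval v := by
  induction e with
  | one | var => rfl
  | bin op e₁ e₂ ih₁ ih₂ => simp only [subst, eval, ih₁, ih₂]

lemma size_subst_le {f : σ → ArithExpr τ} {B : ℕ} (hB : 1 ≤ B) (hf : ∀ s, (f s).size ≤ B)
    (e : ArithExpr σ) : (e.subst f).size ≤ e.size * B := by
  induction e with
  | one => simpa [subst, size] using hB
  | var s => simpa [subst, size] using hf s
  | bin op e₁ e₂ ih₁ ih₂ => simp only [subst, size]; nlinarith

def ofNatSucc : ℕ → ArithExpr σ
  | 0 => 1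
  | m + 1 => if m % 2 = 0 then (1 + 1) * ofNatSucc (m / 2) else 1 + (1 + 1) * ofNatSucc (m / 2)
decreasing_by all_goals omega

lemma eval_ofNatSucc (v : σ → ℤ) (m : ℕ) : (ofNatSucc m : ArithExpr σ).eval v = m + 1 := by
  induction m using Nat.strong_induction_on with
  | _ m ih =>
    match m with
    | 0 => simp [ofNatSucc]
    | k + 1 =>
      rw [ofNatSucc]
      have := ih (k / 2) (by omega)
      split_ifs <;> simp only [eval_add, eval_mul, eval_one, this] <;> omega

lemma size_ofNatSucc_le (m : ℕ) : (ofNatSucc m : ArithExpr σ).size ≤ 6 * Nat.log 2 (m + 1) + 1 := by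
  induction m using Nat.strong_induction_on with
  | _ m ih =>
    match m with
    | 0 => simp [ofNatSucc, size]
    | k + 1 =>
      rw [ofNatSucc]
      have hk := ih (k / 2) (by omega)
      have hlog : Nat.log 2 (k / 2 + 1) + 1 ≤ Nat.log 2 (k + 1 + 1) := by
        rw [← Nat.log_mul_base (by norm_num) (by omega)]
        exact Nat.log_mono_right (by omega)
      split_ifs <;> simp only [size] at hk ⊢ <;> omega

/-- One auxiliary variable for each node of `e` that is not a variable. -/
def Node : ArithExpr σ → Type
  | one => Unit
  | var _ => Empty
  | bin _ e₁ e₂ => e₁.Node ⊕ e₂.Node ⊕ Unit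

instance instFintypeNode : (e : ArithExpr σ) → Fintype e.Node
  | one => inferInstanceAs (Fintype Unit)
  | var _ => inferInstanceAs (Fintype Empty)
  | bin _ e₁ e₂ =>
    letI := instFintypeNode e₁
    letI := instFintypeNode e₂
    inferInstanceAs (Fintype (e₁.Node ⊕ e₂.Node ⊕ Unit))

lemma card_node_le_size (e : ArithExpr σ) : Fintype.card e.Node ≤ e.size := by
  induction e with
  | one => exact Fintype.card_unit.le
  | var => exact (Fintype.card_eq_zero (α := Empty)).trans_le (Nat.zero_le _)
  | bin op e₁ e₂ ih₁ ih₂ =>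
    change Fintype.card (e₁.Node ⊕ e₂.Node ⊕ Unit) ≤ _
    simp only [Fintype.card_sum, Fintype.card_unit, size]
    omega

section Joint

variable {A B : Type*}

def inl₁ : σ ⊕ A → σ ⊕ (A ⊕ B ⊕ Unit) := Sum.map id Sum.inl

def inl₂ : σ ⊕ B → σ ⊕ (A ⊕ B ⊕ Unit) := Sum.map id (Sum.inr ∘ Sum.inl)

def top : σ ⊕ (A ⊕ B ⊕ Unit) := .inr (.inr (.inr ()))

@[simp] lemma inl₁_comp_inl : (inl₁ : σ ⊕ A → σ ⊕ (A ⊕ B ⊕ Unit)) ∘ Sum.inl = Sum.inl := rfl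

@[simp] lemma inl₂_comp_inl : (inl₂ : σ ⊕ B → σ ⊕ (A ⊕ B ⊕ Unit)) ∘ Sum.inl = Sum.inl := rfl

lemma eq_elim_iff {x : σ ⊕ (A ⊕ B ⊕ Unit) → ℤ} {x₁ : A → ℤ} {x₂ : B → ℤ} {c : ℤ} :
    x = Sum.elim (x ∘ .inl) (Sum.elim x₁ (Sum.elim x₂ fun _ => c)) ↔
      x ∘ inl₁ = Sum.elim (x ∘ .inl) x₁ ∧ x ∘ inl₂ = Sum.elim (x ∘ .inl) x₂ ∧ x top = c := by
  constructor
  · intro h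
    refine ⟨funext ?_, funext ?_, ?_⟩
    · rintro (s | a) <;> rw [h] <;> rfl
    · rintro (s | b) <;> rw [h] <;> rfl
    · rw [h]; rfl
  · rintro ⟨h₁, h₂, h₃⟩
    funext t
    rcases t with s | a | b | u
    · rfl
    · exact congrFun h₁ (.inr a)
    · exact congrFun h₂ (.inr b)
    · exact h₃

end Joint

def out : (e : ArithExpr σ) → σ ⊕ e.Node
  | one => .inr ()
  | var s => .inl s
  | bin .. => top

def eqns : (e : ArithExpr σ) → List (Eqn (σ ⊕ e.Node))
  | one => [.one (.inr ())]
  | var _ => []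
  | bin op e₁ e₂ => e₁.eqns.map (.map inl₁) ++ e₂.eqns.map (.map inl₂) ++
      [.bin op (inl₁ e₁.out) (inl₂ e₂.out) top]

def nodeVal (v : σ → ℤ) : (e : ArithExpr σ) → e.Node → ℤ
  | one => fun _ => 1
  | var _ => Empty.elim
  | bin op e₁ e₂ => Sum.elim (e₁.nodeVal v) (Sum.elim (e₂.nodeVal v)
      fun _ => op.apply (e₁.eval v) (e₂.eval v))

def valuation (v : σ → ℤ) (e : ArithExpr σ) : σ ⊕ e.Node → ℤ := Sum.elim v (e.nodeVal v)

lemma valuation_out (v : σ → ℤ) (e : ArithExpr σ) : e.valuation v e.out = e.eval v := by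
  cases e <;> rfl

lemma mem_solutions_eqns_iff {e : ArithExpr σ} {x : σ ⊕ e.Node → ℤ} :
    x ∈ Eqn.solutions e.eqns ↔ x = e.valuation (x ∘ .inl) := by
  induction e with
  | one =>
    simp only [eqns, Eqn.solutions, List.mem_singleton, forall_eq, Eqn.Holds, Set.mem_ofPred_eq]
    constructor
    · intro h
      funext t
      rcases t with s | u
      exacts [rfl, h]
    · intro h
      rw [h]
      rfl
  | var =>
    simp only [eqns, Eqn.solutions, List.not_mem_nil, IsEmpty.forall_iff, implies_true,
      Set.ofPred_true, Set.mem_univ, true_iff]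
    funext t
    rcases t with s | u
    exacts [rfl, u.elim]
  | bin op e₁ e₂ ih₁ ih₂ =>
    revert x
    show ∀ x : σ ⊕ (e₁.Node ⊕ e₂.Node ⊕ Unit) → ℤ,
      x ∈ Eqn.solutions (e₁.eqns.map (.map inl₁) ++ e₂.eqns.map (.map inl₂) ++
        [.bin op (inl₁ e₁.out) (inl₂ e₂.out) top]) ↔
      x = Sum.elim (x ∘ .inl) (Sum.elim (e₁.nodeVal (x ∘ .inl)) (Sum.elim (e₂.nodeVal (x ∘ .inl))
        fun _ => op.apply (e₁.eval (x ∘ .inl)) (e₂.eval (x ∘ .inl))))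
    intro x
    have hout₁ : x (inl₁ e₁.out) = (x ∘ inl₁) e₁.out := rfl
    have hout₂ : x (inl₂ e₂.out) = (x ∘ inl₂) e₂.out := rfl
    simp only [Eqn.solutions_append, Set.mem_inter_iff, Eqn.mem_solutions_map, ih₁, ih₂,
      Function.comp_assoc, inl₁_comp_inl, inl₂_comp_inl]
    simp only [Eqn.solutions, List.mem_singleton, forall_eq, Eqn.Holds, Set.mem_ofPred_eq]
    rw [eq_elim_iff, hout₁, hout₂]
    constructor
    · rintro ⟨⟨h₁, h₂⟩, h⟩
      refine ⟨h₁, h₂, ?_⟩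
      rw [← h, h₁, h₂]
      exact congrArg₂ op.apply (valuation_out _ e₁) (valuation_out _ e₂)
    · rintro ⟨h₁, h₂, h⟩
      refine ⟨⟨h₁, h₂⟩, ?_⟩
      rw [h, h₁, h₂]
      exact congrArg₂ op.apply (valuation_out _ e₁) (valuation_out _ e₂)

/-- The system of `e₁ = e₂`: the spare top variable `z` is forced to `0` by `z + z = z`, so that
`out₁ + z = out₂` equates the two outputs. -/
def eqnsEq (e₁ e₂ : ArithExpr σ) : List (Eqn (σ ⊕ (e₁.Node ⊕ e₂.Node ⊕ Unit))) :=
  e₁.eqns.map (.map inl₁) ++ e₂.eqns.map (.map inl₂) ++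
    [.bin .add top top top, .bin .add (inl₁ e₁.out) top (inl₂ e₂.out)]

def valuationEq (e₁ e₂ : ArithExpr σ) (v : σ → ℤ) : σ ⊕ (e₁.Node ⊕ e₂.Node ⊕ Unit) → ℤ :=
  Sum.elim v (Sum.elim (e₁.nodeVal v) (Sum.elim (e₂.nodeVal v) fun _ => 0))

lemma solutions_eqnsEq (e₁ e₂ : ArithExpr σ) :
    Eqn.solutions (eqnsEq e₁ e₂) = valuationEq e₁ e₂ '' {v | e₁.eval v = e₂.eval v} := by
  ext x
  have hout₁ : x (inl₁ e₁.out) = (x ∘ inl₁) e₁.out := rfl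
  have hout₂ : x (inl₂ e₂.out) = (x ∘ inl₂) e₂.out := rfl
  simp only [eqnsEq, Eqn.solutions_append, Set.mem_inter_iff, Eqn.mem_solutions_map,
    mem_solutions_eqns_iff, Function.comp_assoc, inl₁_comp_inl, inl₂_comp_inl]
  simp only [Eqn.solutions, List.mem_cons, List.not_mem_nil, or_false, forall_eq_or_imp,
    forall_eq, Eqn.Holds, BinOp.apply, Set.mem_ofPred_eq, Set.mem_image, hout₁, hout₂]
  constructor
  · rintro ⟨⟨h₁, h₂⟩, hz, h⟩
    have hz : x top = 0 := by linarith
    refine ⟨x ∘ .inl, ?_, (eq_elim_iff.mpr ⟨h₁, h₂, hz⟩).symm⟩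
    rw [← valuation_out, ← valuation_out, ← h₁, ← h₂, ← h, hz, add_zero]
  · rintro ⟨v, hv, rfl⟩
    obtain ⟨h₁, h₂, hz⟩ := (eq_elim_iff (x := valuationEq e₁ e₂ v)).mp rfl
    refine ⟨⟨h₁, h₂⟩, by rw [hz]; rfl, ?_⟩
    rw [h₁, h₂, hz, add_zero]
    exact (valuation_out v e₁).trans (hv.trans (valuation_out v e₂).symm)

theorem ncard_eval_eq_le_gBound [Fintype σ] {n : ℕ} (e₁ e₂ : ArithExpr σ)
    (hn : Fintype.card σ + e₁.size + e₂.size + 1 ≤ n)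
    (hfin : {v : σ → ℤ | e₁.eval v = e₂.eval v}.Finite) :
    {v : σ → ℤ | e₁.eval v = e₂.eval v}.ncard ≤ gBound n := by
  have hinj : (valuationEq e₁ e₂).Injective := fun v w h => congrArg (· ∘ Sum.inl) h
  rw [← Set.ncard_image_of_injective _ hinj, ← solutions_eqnsEq]
  refine Eqn.ncard_solutions_le_gBound _ ?_ (solutions_eqnsEq e₁ e₂ ▸ hfin.image _)
  simp only [Fintype.card_sum, Fintype.card_unit]
  have := card_node_le_size e₁
  have := card_node_le_size e₂
  omega

end ArithExpr

lemma MvPolynomial.exists_arithExpr_eval_sub {σ : Type*} (W : MvPolynomial σ ℤ) :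
    ∃ e₁ e₂ : ArithExpr σ, ∀ v, eval v W = e₁.eval v - e₂.eval v := by
  induction W using MvPolynomial.induction_on with
  | C a =>
    refine ⟨.ofNatSucc a.toNat, .ofNatSucc (-a).toNat, fun v => ?_⟩
    rw [ArithExpr.eval_ofNatSucc, ArithExpr.eval_ofNatSucc, eval_C]
    omega
  | add p q hp hq =>
    obtain ⟨p₁, p₂, hp⟩ := hp
    obtain ⟨q₁, q₂, hq⟩ := hq
    exact ⟨p₁ + q₁, p₂ + q₂, fun v => by simp only [map_add, hp, hq, ArithExpr.eval_add]; ring⟩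
  | mul_X p i hp =>
    obtain ⟨p₁, p₂, hp⟩ := hp
    exact ⟨p₁ * .var i, p₂ * .var i, fun v => by
      simp only [map_mul, eval_X, hp, ArithExpr.eval_mul, ArithExpr.eval_var]; ring⟩

lemma exists_add_mul_log_le (A B : ℕ) : ∃ n, A + B * Nat.log 2 n ≤ n := by
  refine ⟨2 ^ (2 * (A + B) + 2), ?_⟩
  have hm : A + B + 1 ≤ 2 ^ (A + B) := Nat.lt_two_pow_self
  have hpow : 2 ^ (2 * (A + B) + 2) = 4 * (2 ^ (A + B) * 2 ^ (A + B)) := by ring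
  rw [Nat.log_pow (by norm_num), hpow]
  nlinarith [Nat.mul_le_mul hm hm]

section FourSquares

variable {ι : Type*}

def sumSqExpr (s : ι) : ArithExpr (ι × Fin 4) :=
  .var (s, 0) * .var (s, 0) + .var (s, 1) * .var (s, 1) +
    .var (s, 2) * .var (s, 2) + .var (s, 3) * .var (s, 3)

def sumSq (v : ι × Fin 4 → ℤ) (s : ι) : ℕ := ∑ k, (v (s, k)).natAbs ^ 2

lemma eval_sumSqExpr (v : ι × Fin 4 → ℤ) (s : ι) : (sumSqExpr s).eval v = sumSq v s := by
  simp only [sumSqExpr, sumSq, ArithExpr.eval_add, ArithExpr.eval_mul, ArithExpr.eval_var,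
    Fin.sum_univ_four]
  push_cast
  simp only [sq_abs]
  ring

lemma size_sumSqExpr (s : ι) : (sumSqExpr s).size = 15 := rfl

lemma natAbs_le_sumSq (v : ι × Fin 4 → ℤ) (s : ι) (k : Fin 4) : (v (s, k)).natAbs ≤ sumSq v s :=
  (Nat.le_self_pow two_ne_zero _).trans
    (Finset.single_le_sum (f := fun i => (v (s, i)).natAbs ^ 2) (fun _ _ => Nat.zero_le _)
      (Finset.mem_univ k))

lemma exists_sumSq_eq (m : ι → ℕ) : ∃ v : ι × Fin 4 → ℤ, sumSq v = m := by
  choose a b c d h using fun s => Nat.sum_four_squares (m s)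
  refine ⟨fun p => ((![a p.1, b p.1, c p.1, d p.1] p.2 : ℕ) : ℤ), funext fun s => ?_⟩
  simp [sumSq, Fin.sum_univ_four, h]

end FourSquares

section Lift

variable {r : ℕ}

/-- `x₁ ↦ n`, `x₂ ↦ z + w` and `y_j ↦ y_j'`, where `z`, `w`, `y_j'` are sums of four squares of
fresh variables; `z` and `w` live in the slots `inl 0` and `inl 1` of `x₁` and `x₂`. -/
def liftSubst (r n : ℕ) : Fin 2 ⊕ Fin r → ArithExpr ((Fin 2 ⊕ Fin r) × Fin 4) :=
  Sum.elim ![.ofNatSucc (n - 1), sumSqExpr (.inl 0) + sumSqExpr (.inl 1)]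
    fun j => sumSqExpr (.inr j)

lemma eval_liftSubst {n : ℕ} (hn : 1 ≤ n) (v : (Fin 2 ⊕ Fin r) × Fin 4 → ℤ) :
    (fun s => (liftSubst r n s).eval v) =
      Sum.elim ![(n : ℤ), ((sumSq v (.inl 0) + sumSq v (.inl 1) : ℕ) : ℤ)]
        fun j => (sumSq v (.inr j) : ℤ) := by
  funext s
  rcases s with i | j
  · fin_cases i
    · simp [liftSubst, ArithExpr.eval_ofNatSucc]
      omega
    · simp [liftSubst, eval_sumSqExpr]
  · simp [liftSubst, eval_sumSqExpr]

lemma size_subst_liftSubst_le {n : ℕ} (hn : 1 ≤ n) (e : ArithExpr (Fin 2 ⊕ Fin r)) :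
    (e.subst (liftSubst r n)).size ≤ e.size * (6 * Nat.log 2 n + 31) := by
  refine ArithExpr.size_subst_le (by omega) (fun s => ?_) e
  rcases s with i | j
  · fin_cases i
    · have := ArithExpr.size_ofNatSucc_le (σ := (Fin 2 ⊕ Fin r) × Fin 4) (n - 1)
      rw [Nat.sub_add_cancel hn] at this
      simpa [liftSubst] using this.trans (by omega)
    · simp [liftSubst, ArithExpr.size, size_sumSqExpr]
  · simp [liftSubst, size_sumSqExpr]

variable (W : MvPolynomial (Fin 2 ⊕ Fin r) ℤ) (n : ℕ)

def liftedZeros : Set ((Fin 2 ⊕ Fin r) × Fin 4 → ℤ) :=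
  {v | eval (Sum.elim ![(n : ℤ), ((sumSq v (.inl 0) + sumSq v (.inl 1) : ℕ) : ℤ)]
    fun j => (sumSq v (.inr j) : ℤ)) W = 0}

variable {W n}

lemma liftedZeros_eq {e₁ e₂ : ArithExpr (Fin 2 ⊕ Fin r)}
    (hW : ∀ v, eval v W = e₁.eval v - e₂.eval v) (hn : 1 ≤ n) :
    liftedZeros W n =
      {v | (e₁.subst (liftSubst r n)).eval v = (e₂.subst (liftSubst r n)).eval v} := by
  ext v
  simp only [liftedZeros, Set.mem_ofPred_eq, ArithExpr.eval_subst, eval_liftSubst hn, hW,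
    sub_eq_zero]

lemma liftedZeros_finite {b₀ : ℕ}
    (hb : ∀ (b : ℕ) (y : Fin r → ℕ), eval (Sum.elim ![(n : ℤ), (b : ℤ)] fun j => (y j : ℤ)) W = 0 →
      b = b₀)
    (hfin :
      {y : Fin r → ℕ | eval (Sum.elim ![(n : ℤ), (b₀ : ℤ)] fun j => (y j : ℤ)) W = 0}.Finite) :
    (liftedZeros W n).Finite := by
  obtain ⟨N, hN⟩ := hfin.bddAbove
  set M := b₀ + ∑ j, N j
  refine (Set.finite_Icc (fun _ => -(M : ℤ)) fun _ => (M : ℤ)).subset fun v hv => ?_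
  have hb' := hb _ _ hv
  have hy : ∀ j, sumSq v (.inr j) ≤ N j := hN (hb' ▸ hv)
  have hbound : ∀ s, sumSq v s ≤ M := by
    rintro (i | j)
    · fin_cases i <;> simp <;> omega
    · exact (hy j).trans ((Finset.single_le_sum (fun _ _ => Nat.zero_le _)
        (Finset.mem_univ j)).trans (Nat.le_add_left _ _))
  have habs : ∀ p, (v p).natAbs ≤ M := fun ⟨s, k⟩ => (natAbs_le_sumSq v s k).trans (hbound s)
  exact ⟨fun p => by have := habs p; simp only; omega, fun p => by have := habs p; simp only; omega⟩

lemma le_ncard_liftedZeros {b₀ : ℕ} {y₀ : Fin r → ℕ}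
    (hy₀ : eval (Sum.elim ![(n : ℤ), (b₀ : ℤ)] fun j => (y₀ j : ℤ)) W = 0)
    (hfin : (liftedZeros W n).Finite) :
    b₀ + 1 ≤ (liftedZeros W n).ncard := by
  choose u hu using fun k : Fin (b₀ + 1) => exists_sumSq_eq (Sum.elim ![(k : ℕ), b₀ - k] y₀)
  have hz : ∀ k, sumSq (u k) (.inl 0) = k := fun k => by rw [hu]; rfl
  have hmem : ∀ k, u k ∈ liftedZeros W n := fun k => by
    have : (k : ℕ) + (b₀ - k) = b₀ := Nat.add_sub_cancel' (Nat.lt_succ_iff.mp k.isLt)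
    simpa only [liftedZeros, Set.mem_ofPred_eq, hu, Sum.elim_inl, Sum.elim_inr,
      Matrix.cons_val_zero, Matrix.cons_val_one, Matrix.head_cons, this] using hy₀
  have hinj : Function.Injective u := fun k l h => Fin.ext (by rw [← hz k, ← hz l, h])
  calc b₀ + 1 = (Set.range u).ncard := by simp [Set.ncard_range_of_injective hinj]
    _ ≤ _ := Set.ncard_le_ncard (Set.range_subset_iff.mpr hmem) hfin

end Lift

/-- there is no finite-fold Diophantine representation of `g`. -/
theorem stmt6 :
    ¬ ∃ (r : ℕ) (W : MvPolynomial (Fin 2 ⊕ Fin r) ℤ),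
      (∀ a b : ℕ,
        (1 ≤ a ∧ b = gBound a) ↔
          ∃ y : Fin r → ℕ,
            eval (Sum.elim ![(a : ℤ), (b : ℤ)] fun j => (y j : ℤ)) W = 0) ∧
      (∀ a b : ℕ,
        {y : Fin r → ℕ |
          eval (Sum.elim ![(a : ℤ), (b : ℤ)] fun j => (y j : ℤ)) W = 0}.Finite) := by
  rintro ⟨r, W, hrep, hfin⟩
  obtain ⟨e₁, e₂, hW⟩ := W.exists_arithExpr_eval_sub
  obtain ⟨n, hn⟩ := exists_add_mul_log_le (4 * (2 + r) + 31 * (e₁.size + e₂.size) + 1)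
    (6 * (e₁.size + e₂.size))
  have hn₁ : 1 ≤ n := by omega
  have hfin' : (liftedZeros W n).Finite :=
    liftedZeros_finite (fun b y hy => ((hrep n b).mpr ⟨y, hy⟩).2) (hfin n (gBound n))
  obtain ⟨y₀, hy₀⟩ := (hrep n (gBound n)).mp ⟨hn₁, rfl⟩
  have hge : gBound n + 1 ≤ (liftedZeros W n).ncard := le_ncard_liftedZeros hy₀ hfin'
  have hle : (liftedZeros W n).ncard ≤ gBound n := by
    rw [liftedZeros_eq hW hn₁] at hfin' ⊢
    refine ArithExpr.ncard_eval_eq_le_gBound _ _ ?_ hfin'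
    have h₁ := size_subst_liftSubst_le hn₁ e₁
    have h₂ := size_subst_liftSubst_le hn₁ e₂
    simp only [Fintype.card_prod, Fintype.card_sum, Fintype.card_fin]
    nlinarith
  omega
end
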